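/- arXiv:2103.07652 — 4 statements merged into one kernel-verified Lean document; each statement's English description precedes it below -/
import Mathlib

section
/- If T = [[A, B],[C, D]] is a 2×2 operator matrix acting on H₁ ⊕ H₂, then w(T) ≤ (1/2)( w(A) + w(D) + √( (w(A) − w(D))² + (‖B‖ + ‖C‖)² ) ). -/
noncomputable def numRad {H : Type*} [NormedAddCommGroup H] [InnerProductSpace ℂ H]
    (T : H →L[ℂ] H) : ℝ :=
  sSup {r : ℝ | ∃ x : H, ‖x‖ = 1 ∧ r = ‖(inner ℂ (T x) x : ℂ)‖}

/-!
Write a unit vector of `H₁ ⊕ H₂` as `(x, y)` with `‖x‖² + ‖y‖² = 1`. Then `⟪T(x, y), (x, y)⟫`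
splits into the four blocks, and bounding each gives
`|⟪T(x, y), (x, y)⟫| ≤ w(A) ‖x‖² + w(D) ‖y‖² + (‖B‖ + ‖C‖) ‖x‖ ‖y‖`.
This is the quadratic form of the real symmetric matrix `[[w(A), k/2], [k/2, w(D)]]`, with
`k = ‖B‖ + ‖C‖`, evaluated at the unit vector `(‖x‖, ‖y‖)`, so it is bounded by the largest
eigenvalue `(w(A) + w(D) + √((w(A) - w(D))² + k²)) / 2` of that matrix.
-/

open scoped InnerProductSpace

theorem quadratic_form_le_of_sq_add_sq_eq_one {a d k s t : ℝ} (h : s ^ 2 + t ^ 2 = 1) :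
    a * s ^ 2 + d * t ^ 2 + k * s * t ≤ (1 / 2) * (a + d + √((a - d) ^ 2 + k ^ 2)) := by
  have hP : (a - d) * (s ^ 2 - t ^ 2) + 2 * k * s * t ≤ √((a - d) ^ 2 + k ^ 2) := by
    apply Real.le_sqrt_of_sq_le
    have lagrange : ((a - d) * (s ^ 2 - t ^ 2) + 2 * k * s * t) ^ 2
        + ((a - d) * (2 * s * t) - k * (s ^ 2 - t ^ 2)) ^ 2
        = ((a - d) ^ 2 + k ^ 2) * (s ^ 2 + t ^ 2) ^ 2 := by ring
    rw [h, one_pow, mul_one] at lagrange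
    nlinarith [sq_nonneg ((a - d) * (2 * s * t) - k * (s ^ 2 - t ^ 2))]
  linear_combination hP / 2 + (a + d) / 2 * h

section NumRad

variable {H : Type*} [NormedAddCommGroup H] [InnerProductSpace ℂ H] (T : H →L[ℂ] H)

theorem numRad_nonneg : 0 ≤ numRad T :=
  Real.sSup_nonneg fun _ ⟨_, _, hr⟩ => hr ▸ norm_nonneg _

theorem numRad_le {c : ℝ} (hc : 0 ≤ c) (h : ∀ x, ‖x‖ = 1 → ‖⟪T x, x⟫_ℂ‖ ≤ c) :
    numRad T ≤ c :=
  Real.sSup_le (fun _ ⟨x, hx, hr⟩ => hr ▸ h x hx) hc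

theorem norm_inner_le_numRad {x : H} (hx : ‖x‖ = 1) : ‖⟪T x, x⟫_ℂ‖ ≤ numRad T := by
  refine le_csSup ⟨‖T‖, ?_⟩ ⟨x, hx, rfl⟩
  rintro _ ⟨y, hy, rfl⟩
  calc ‖⟪T y, y⟫_ℂ‖ ≤ ‖T y‖ * ‖y‖ := norm_inner_le_norm _ _
    _ ≤ ‖T‖ * ‖y‖ * ‖y‖ := by gcongr; exact T.le_opNorm y
    _ = ‖T‖ := by rw [hy, mul_one, mul_one]

theorem norm_inner_le_numRad_mul_sq (x : H) : ‖⟪T x, x⟫_ℂ‖ ≤ numRad T * ‖x‖ ^ 2 := by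
  rcases eq_or_ne x 0 with rfl | hx
  · simp
  have hunit := norm_inner_le_numRad T (norm_smul_inv_norm (𝕜 := ℂ) hx)
  rw [map_smul, inner_smul_left, inner_smul_right, norm_mul, norm_mul] at hunit
  simp only [Complex.coe_algebraMap, map_inv₀, Complex.conj_ofReal, norm_inv, Complex.norm_real,
    norm_norm] at hunit
  have hx' : 0 < ‖x‖ := norm_pos_iff.mpr hx
  calc ‖⟪T x, x⟫_ℂ‖ = ‖x‖ ^ 2 * (‖x‖⁻¹ * (‖x‖⁻¹ * ‖⟪T x, x⟫_ℂ‖)) := by field_simp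
    _ ≤ ‖x‖ ^ 2 * numRad T := by gcongr
    _ = numRad T * ‖x‖ ^ 2 := mul_comm _ _

end NumRad

section Block

variable {H₁ H₂ : Type*} [NormedAddCommGroup H₁] [InnerProductSpace ℂ H₁]
  [NormedAddCommGroup H₂] [InnerProductSpace ℂ H₂]

theorem norm_inner_block_le (A : H₁ →L[ℂ] H₁) (B : H₂ →L[ℂ] H₁) (C : H₁ →L[ℂ] H₂)
    (D : H₂ →L[ℂ] H₂) (x : H₁) (y : H₂) :
    ‖⟪A x + B y, x⟫_ℂ + ⟪C x + D y, y⟫_ℂ‖ ≤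
      numRad A * ‖x‖ ^ 2 + numRad D * ‖y‖ ^ 2 + (‖B‖ + ‖C‖) * ‖x‖ * ‖y‖ := by
  have hB : ‖⟪B y, x⟫_ℂ‖ ≤ ‖B‖ * ‖y‖ * ‖x‖ :=
    (norm_inner_le_norm _ _).trans (by gcongr; exact B.le_opNorm y)
  have hC : ‖⟪C x, y⟫_ℂ‖ ≤ ‖C‖ * ‖x‖ * ‖y‖ :=
    (norm_inner_le_norm _ _).trans (by gcongr; exact C.le_opNorm x)
  have hA := norm_inner_le_numRad_mul_sq A x
  have hD := norm_inner_le_numRad_mul_sq D y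
  rw [inner_add_left, inner_add_left]
  calc ‖⟪A x, x⟫_ℂ + ⟪B y, x⟫_ℂ + (⟪C x, y⟫_ℂ + ⟪D y, y⟫_ℂ)‖
      ≤ ‖⟪A x, x⟫_ℂ‖ + ‖⟪B y, x⟫_ℂ‖ + (‖⟪C x, y⟫_ℂ‖ + ‖⟪D y, y⟫_ℂ‖) :=
        (norm_add_le _ _).trans (add_le_add (norm_add_le _ _) (norm_add_le _ _))
    _ ≤ numRad A * ‖x‖ ^ 2 + numRad D * ‖y‖ ^ 2 + (‖B‖ + ‖C‖) * ‖x‖ * ‖y‖ := by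
        linarith

end Block

theorem numRad_block_2x2_general
    {H₁ H₂ : Type*} [NormedAddCommGroup H₁] [InnerProductSpace ℂ H₁]
    [NormedAddCommGroup H₂] [InnerProductSpace ℂ H₂]
    (A : H₁ →L[ℂ] H₁) (B : H₂ →L[ℂ] H₁) (C : H₁ →L[ℂ] H₂) (D : H₂ →L[ℂ] H₂)
    (T : WithLp 2 (H₁ × H₂) →L[ℂ] WithLp 2 (H₁ × H₂))
    (hT : ∀ z : WithLp 2 (H₁ × H₂),
      T z = (WithLp.equiv 2 (H₁ × H₂)).symm
        (A ((WithLp.equiv 2 (H₁ × H₂)) z).1 + B ((WithLp.equiv 2 (H₁ × H₂)) z).2,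
         C ((WithLp.equiv 2 (H₁ × H₂)) z).1 + D ((WithLp.equiv 2 (H₁ × H₂)) z).2)) :
    numRad T ≤ (1 / 2 : ℝ) * (numRad A + numRad D +
      Real.sqrt ((numRad A - numRad D) ^ 2 + (‖B‖ + ‖C‖) ^ 2)) := by
  have hbound_nonneg : 0 ≤ (1 / 2 : ℝ) * (numRad A + numRad D +
      √((numRad A - numRad D) ^ 2 + (‖B‖ + ‖C‖) ^ 2)) := by
    have := numRad_nonneg A; have := numRad_nonneg D; positivity
  refine numRad_le T hbound_nonneg fun z hz => ?_
  have hunit : ‖z.fst‖ ^ 2 + ‖z.snd‖ ^ 2 = 1 := by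
    rw [← WithLp.prod_norm_sq_eq_of_L2, hz, one_pow]
  have hinner : ⟪T z, z⟫_ℂ = ⟪A z.fst + B z.snd, z.fst⟫_ℂ + ⟪C z.fst + D z.snd, z.snd⟫_ℂ := by
    rw [hT z, WithLp.prod_inner_apply]
    rfl
  rw [hinner]
  exact (norm_inner_block_le A B C D _ _).trans
    (quadratic_form_le_of_sq_add_sq_eq_one hunit)

theorem numRad_block_2x2
    {H₁ H₂ : Type*} [NormedAddCommGroup H₁] [InnerProductSpace ℂ H₁] [CompleteSpace H₁]
    [NormedAddCommGroup H₂] [InnerProductSpace ℂ H₂] [CompleteSpace H₂]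
    (A : H₁ →L[ℂ] H₁) (B : H₂ →L[ℂ] H₁) (C : H₁ →L[ℂ] H₂) (D : H₂ →L[ℂ] H₂)
    (T : WithLp 2 (H₁ × H₂) →L[ℂ] WithLp 2 (H₁ × H₂))
    (hT : ∀ z : WithLp 2 (H₁ × H₂),
      T z = (WithLp.equiv 2 (H₁ × H₂)).symm
        (A ((WithLp.equiv 2 (H₁ × H₂)) z).1 + B ((WithLp.equiv 2 (H₁ × H₂)) z).2,
         C ((WithLp.equiv 2 (H₁ × H₂)) z).1 + D ((WithLp.equiv 2 (H₁ × H₂)) z).2)) :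
    numRad T ≤ (1 / 2 : ℝ) * (numRad A + numRad D +
      Real.sqrt ((numRad A - numRad D) ^ 2 + (‖B‖ + ‖C‖) ^ 2)) :=
  numRad_block_2x2_general A B C D T hT
end

section
/- Mixed Schwarz inequality: for any bounded operator A on a Hilbert space and any α ∈ [0,1], |⟨Ax,y⟩|² ≤ ⟨|A|^{2α} x, x⟩ · ⟨|A*|^{2(1−α)} y, y⟩ for all vectors x, y. -/
/-!
Put `P = A†A` and, for `ε > 0`, `P_ε = |P| + ε`, which is `P + ε` since `P ≥ 0` (the absolute
value only makes the real powers of `|t| + ε` continuous on all of `ℝ`). Splitting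
`⟪A x, y⟫ = ⟪P_ε^{α/2} x, P_ε^{-α/2} A† y⟫` and applying Cauchy–Schwarz gives
`|⟪A x, y⟫|² ≤ ⟪P_ε^α x, x⟫ ⟪A P_ε^{-α} A† y, y⟫`. The intertwining `A f(A†A) = f(AA†) A` turns
the second operator into `g(AA†)` with `g(t) = t (t + ε)^{-α} ≤ t^{1-α}`, and `P_ε^α → P^α` in
norm as `ε → 0`.
-/

open ContinuousLinearMap
open Filter Topology Polynomial
open scoped InnerProductSpace

theorem Real.add_rpow_neg_mul_le_rpow_one_sub {t ε α : ℝ} (ht : 0 ≤ t) (hε : 0 ≤ ε)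
    (hα : 0 ≤ α) : (t + ε) ^ (-α) * t ≤ t ^ (1 - α) := by
  rcases ht.eq_or_lt with rfl | ht
  · simpa using Real.rpow_nonneg le_rfl _
  calc (t + ε) ^ (-α) * t ≤ t ^ (-α) * t :=
        mul_le_mul_of_nonneg_right
          (Real.rpow_le_rpow_of_nonpos ht (le_add_of_nonneg_right hε) (neg_nonpos.2 hα)) ht.le
    _ = t ^ (1 - α) := by rw [sub_eq_neg_add, Real.rpow_add ht, Real.rpow_one]

theorem continuous_abs_add_rpow {ε : ℝ} (hε : 0 < ε) (p : ℝ) :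
    Continuous fun t : ℝ => (|t| + ε) ^ p :=
  (continuous_abs.add continuous_const).rpow_const fun t =>
    Or.inl (add_pos_of_nonneg_of_pos (abs_nonneg t) hε).ne'

theorem exists_tendstoUniformlyOn_polynomial_eval {s : Set ℝ} (hs : IsCompact s) {f : ℝ → ℝ}
    (hf : Continuous f) :
    ∃ p : ℕ → ℝ[X], TendstoUniformlyOn (fun n t => (p n).eval t) f atTop s := by
  obtain ⟨r, hr⟩ := hs.isBounded.subset_closedBall 0
  rw [Real.closedBall_eq_Icc, zero_sub, zero_add] at hr
  choose p hp using fun n : ℕ =>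
    exists_polynomial_near_of_continuousOn (-r) r f hf.continuousOn (1 / (n + 1)) (by positivity)
  refine ⟨p, Metric.tendstoUniformlyOn_iff.2 fun δ hδ => ?_⟩
  obtain ⟨N, hN⟩ := exists_nat_one_div_lt hδ
  filter_upwards [eventually_ge_atTop N] with n hn t ht
  rw [Real.dist_eq, abs_sub_comm]
  refine (hp n t (hr ht)).trans_le (hN.le.trans' ?_)
  gcongr

theorem mul_aeval_eq_aeval_mul {R A : Type*} [CommSemiring R] [Semiring A] [Algebra R A]
    {a b c : A} (h : a * b = c * a) (p : R[X]) : a * aeval b p = aeval c p * a := by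
  induction p using Polynomial.induction_on' with
  | add p q hp hq => rw [map_add, map_add, mul_add, add_mul, hp, hq]
  | monomial n r =>
    have hpow : a * b ^ n = c ^ n * a := SemiconjBy.pow_right h n
    rw [aeval_monomial, aeval_monomial, ← mul_assoc, ← Algebra.commutes, mul_assoc, hpow,
      mul_assoc]

theorem tendsto_aeval_cfc {ι A : Type*} [Ring A] [StarRing A] [Algebra ℝ A] [TopologicalSpace A]
    [ContinuousFunctionalCalculus ℝ A IsSelfAdjoint] {b : A} (hb : IsSelfAdjoint b)
    {l : Filter ι} {p : ι → ℝ[X]} {f : ℝ → ℝ}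
    (h : TendstoUniformlyOn (fun n t => (p n).eval t) f l (spectrum ℝ b)) :
    Tendsto (fun n => aeval b (p n)) l (𝓝 (cfc f b)) := by
  simp_rw [← cfc_polynomial _ b hb]
  exact tendsto_cfc_fun h (.of_forall fun n => (p n).continuousOn)

theorem mul_cfc_eq_cfc_mul {A : Type*} [Ring A] [StarRing A] [Algebra ℝ A] [TopologicalSpace A]
    [ContinuousFunctionalCalculus ℝ A IsSelfAdjoint] [IsTopologicalRing A] [T2Space A]
    {a b c : A} (hb : IsSelfAdjoint b) (hc : IsSelfAdjoint c) (h : a * b = c * a) {f : ℝ → ℝ}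
    (hf : Continuous f) : a * cfc f b = cfc f c * a := by
  obtain ⟨p, hp⟩ := exists_tendstoUniformlyOn_polynomial_eval
    ((ContinuousFunctionalCalculus.isCompact_spectrum b).union
      (ContinuousFunctionalCalculus.isCompact_spectrum c)) hf
  have hb' := (tendsto_aeval_cfc hb (hp.mono Set.subset_union_left)).const_mul a
  have hc' := (tendsto_aeval_cfc hc (hp.mono Set.subset_union_right)).mul_const a
  simp_rw [mul_aeval_eq_aeval_mul h] at hb'
  exact tendsto_nhds_unique hb' hc'

section CStarAlgebra

variable {A : Type*} [CStarAlgebra A]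

theorem cfc_abs_add_rpow_mul_cfc_abs_add_rpow (a : A) {ε : ℝ} (hε : 0 < ε) (p q : ℝ) :
    cfc (fun t : ℝ => (|t| + ε) ^ p) a * cfc (fun t : ℝ => (|t| + ε) ^ q) a =
      cfc (fun t : ℝ => (|t| + ε) ^ (p + q)) a := by
  rw [← cfc_mul _ _ a (continuous_abs_add_rpow hε p).continuousOn
    (continuous_abs_add_rpow hε q).continuousOn]
  refine cfc_congr fun t _ => ?_
  rw [Real.rpow_add (add_pos_of_nonneg_of_pos (abs_nonneg t) hε)]

variable [PartialOrder A] [StarOrderedRing A]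

theorem cfc_rpow_two_mul_cfc_sqrt {a : A} (ha : 0 ≤ a) {β : ℝ} (hβ : 0 ≤ β) :
    cfc (fun t : ℝ => t ^ (2 * β)) (cfc Real.sqrt a) = cfc (fun t : ℝ => t ^ β) a := by
  rw [← cfc_comp' _ _ a (Real.continuous_rpow_const (by positivity)).continuousOn]
  refine cfc_congr fun t ht => ?_
  rw [Real.sqrt_eq_rpow, ← Real.rpow_mul (spectrum_nonneg_of_nonneg ha ht)]
  ring_nf

theorem tendsto_cfc_abs_add_rpow {a : A} (ha : 0 ≤ a) {β : ℝ} (hβ : 0 ≤ β) :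
    Tendsto (fun ε : ℝ => cfc (fun t : ℝ => (|t| + ε) ^ β) a) (𝓝 0)
      (𝓝 (cfc (fun t : ℝ => t ^ β) a)) := by
  have hcont : Continuous fun p : ℝ × ℝ => (|p.2| + p.1) ^ β :=
    (Real.continuous_rpow_const hβ).comp ((continuous_abs.comp continuous_snd).add continuous_fst)
  have hunif : TendstoUniformlyOn (fun ε t : ℝ => (|t| + ε) ^ β) (fun t => (|t| + 0) ^ β) (𝓝 0)
      (spectrum ℝ a) := by
    have := ContinuousFunctionalCalculus.compactSpace_spectrum (R := ℝ) a
    rw [tendstoUniformlyOn_iff_tendstoUniformly_comp_coe]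
    exact Continuous.tendstoUniformly (fun ε (t : spectrum ℝ a) => (|(t : ℝ)| + ε) ^ β)
      (hcont.comp (continuous_fst.prodMk (continuous_subtype_val.comp continuous_snd))) 0
  convert tendsto_cfc_fun hunif (.of_forall fun ε => ?_) using 2
  · refine cfc_congr fun t ht => ?_
    rw [add_zero, abs_of_nonneg (spectrum_nonneg_of_nonneg ha ht)]
  · exact (hcont.comp (continuous_const.prodMk continuous_id)).continuousOn

theorem mul_cfc_abs_add_rpow_neg_mul_star_le (a : A) {ε α : ℝ} (hε : 0 < ε) (hα₀ : 0 ≤ α)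
    (hα₁ : α ≤ 1) :
    a * cfc (fun t : ℝ => (|t| + ε) ^ (-α)) (star a * a) * star a ≤
      cfc (fun t : ℝ => t ^ (1 - α)) (a * star a) := by
  have hQ : 0 ≤ a * star a := mul_star_self_nonneg a
  rw [mul_cfc_eq_cfc_mul (star_mul_self_nonneg a).isSelfAdjoint hQ.isSelfAdjoint
    (mul_assoc _ _ _).symm (continuous_abs_add_rpow hε _), mul_assoc]
  nth_rw 2 [← cfc_id' ℝ (a * star a)]
  rw [← cfc_mul _ _ _ (continuous_abs_add_rpow hε _).continuousOn]
  refine cfc_mono (fun t ht => ?_) ((continuous_abs_add_rpow hε _).mul continuous_id).continuousOn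
    (Real.continuous_rpow_const (sub_nonneg.2 hα₁)).continuousOn
  rw [abs_of_nonneg (spectrum_nonneg_of_nonneg hQ ht)]
  exact Real.add_rpow_neg_mul_le_rpow_one_sub (spectrum_nonneg_of_nonneg hQ ht) hε.le hα₀

end CStarAlgebra

namespace ContinuousLinearMap

theorem re_inner_le_re_inner_of_le {𝕜 E : Type*} [RCLike 𝕜] [NormedAddCommGroup E]
    [InnerProductSpace 𝕜 E] {S T : E →L[𝕜] E} (h : S ≤ T) (x : E) :
    RCLike.re ⟪S x, x⟫_𝕜 ≤ RCLike.re ⟪T x, x⟫_𝕜 := by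
  have := ((le_def S T).1 h).re_inner_nonneg_left x
  rwa [sub_apply, inner_sub_left, map_sub, sub_nonneg] at this

theorem norm_inner_le_of_adjoint_mul_eq_one {𝕜 E : Type*} [RCLike 𝕜] [NormedAddCommGroup E]
    [InnerProductSpace 𝕜 E] [CompleteSpace E] {u v : E →L[𝕜] E} (h : adjoint v * u = 1)
    (x w : E) : ‖⟪x, w⟫_𝕜‖ ≤ ‖u x‖ * ‖v w‖ :=
  calc ‖⟪x, w⟫_𝕜‖ = ‖⟪(adjoint v * u) x, w⟫_𝕜‖ := by rw [h, one_apply_eq_self]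
    _ = ‖⟪u x, v w⟫_𝕜‖ := by rw [mul_apply_eq_comp, adjoint_inner_left]
    _ ≤ ‖u x‖ * ‖v w‖ := norm_inner_le_norm _ _

theorem norm_inner_sq_le_re_inner_cfc_abs_add_rpow_mul {H : Type*} [NormedAddCommGroup H]
    [InnerProductSpace ℂ H] [CompleteSpace H] (A : H →L[ℂ] H) {ε α : ℝ} (hε : 0 < ε)
    (hα₀ : 0 ≤ α) (hα₁ : α ≤ 1) (x y : H) :
    ‖⟪A x, y⟫_ℂ‖ ^ 2 ≤
      (⟪cfc (fun t : ℝ => (|t| + ε) ^ α) (adjoint A * A) x, x⟫_ℂ).re *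
      (⟪cfc (fun t : ℝ => t ^ (1 - α)) (A * adjoint A) y, y⟫_ℂ).re := by
  set u := cfc (fun t : ℝ => (|t| + ε) ^ (α / 2)) (adjoint A * A)
  set v := cfc (fun t : ℝ => (|t| + ε) ^ (-(α / 2))) (adjoint A * A)
  have hu : adjoint u = u := IsSelfAdjoint.adjoint_eq (cfc_predicate _ _)
  have hv : adjoint v = v := IsSelfAdjoint.adjoint_eq (cfc_predicate _ _)
  have hvu : adjoint v * u = 1 := by
    simp only [hv, v, u, cfc_abs_add_rpow_mul_cfc_abs_add_rpow _ hε, neg_add_cancel,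
      Real.rpow_zero]
    exact cfc_const_one ℝ _ (IsSelfAdjoint.star_mul_self A)
  have huu : adjoint u * u = cfc (fun t : ℝ => (|t| + ε) ^ α) (adjoint A * A) := by
    rw [hu, cfc_abs_add_rpow_mul_cfc_abs_add_rpow _ hε, add_halves]
  have hvv : v * v = cfc (fun t : ℝ => (|t| + ε) ^ (-α)) (adjoint A * A) := by
    rw [cfc_abs_add_rpow_mul_cfc_abs_add_rpow _ hε, ← neg_add, add_halves]
  have hvA : adjoint (v * adjoint A) * (v * adjoint A) ≤
      cfc (fun t : ℝ => t ^ (1 - α)) (A * adjoint A) := by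
    have h := mul_cfc_abs_add_rpow_neg_mul_star_le A hε hα₀ hα₁
    rw [star_eq_adjoint, ← hvv] at h
    rwa [← star_eq_adjoint, star_mul, star_eq_adjoint, star_eq_adjoint, adjoint_adjoint, hv,
      mul_assoc, ← mul_assoc v, ← mul_assoc]
  calc ‖⟪A x, y⟫_ℂ‖ ^ 2 = ‖⟪x, adjoint A y⟫_ℂ‖ ^ 2 := by rw [adjoint_inner_right]
    _ ≤ (‖u x‖ * ‖(v * adjoint A) y‖) ^ 2 := by
      gcongr
      exact norm_inner_le_of_adjoint_mul_eq_one hvu x _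
    _ = ‖u x‖ ^ 2 * ‖(v * adjoint A) y‖ ^ 2 := mul_pow _ _ 2
    _ ≤ ‖u x‖ ^ 2 * (⟪cfc (fun t : ℝ => t ^ (1 - α)) (A * adjoint A) y, y⟫_ℂ).re := by
      gcongr
      rw [apply_norm_sq_eq_inner_adjoint_left]
      exact re_inner_le_re_inner_of_le hvA y
    _ = _ := by
      rw [apply_norm_sq_eq_inner_adjoint_left, ← huu]
      rfl

end ContinuousLinearMap

theorem mixed_schwarz_inequality
    {H : Type*} [NormedAddCommGroup H] [InnerProductSpace ℂ H] [CompleteSpace H]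
    (A : H →L[ℂ] H) (α : ℝ) (hα : α ∈ Set.Icc (0 : ℝ) 1) (x y : H) :
    ‖(inner ℂ (A x) y : ℂ)‖ ^ 2 ≤
      ((inner ℂ (cfc (fun t : ℝ => t ^ (2 * α)) (cfc Real.sqrt (adjoint A * A)) x) x : ℂ)).re *
      ((inner ℂ (cfc (fun t : ℝ => t ^ (2 * (1 - α))) (cfc Real.sqrt (A * adjoint A)) y) y : ℂ)).re := by
  obtain ⟨hα₀, hα₁⟩ := hα
  have hP : 0 ≤ adjoint A * A := by simpa only [star_eq_adjoint] using star_mul_self_nonneg A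
  have hQ : 0 ≤ A * adjoint A := by simpa only [star_eq_adjoint] using mul_star_self_nonneg A
  rw [cfc_rpow_two_mul_cfc_sqrt hP hα₀, cfc_rpow_two_mul_cfc_sqrt hQ (sub_nonneg.2 hα₁)]
  have hre : Continuous fun T : H →L[ℂ] H => (⟪T x, x⟫_ℂ).re :=
    Complex.continuous_re.comp (((apply ℂ H x).continuous).inner continuous_const)
  have hlim := (((hre.tendsto _).comp (tendsto_cfc_abs_add_rpow hP hα₀)).mono_left
    (nhdsWithin_le_nhds (s := Set.Ioi 0))).mul_const
    (⟪cfc (fun t : ℝ => t ^ (1 - α)) (A * adjoint A) y, y⟫_ℂ).re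
  exact ge_of_tendsto hlim (eventually_nhdsWithin_of_forall fun ε hε =>
    norm_inner_sq_le_re_inner_cfc_abs_add_rpow_mul A hε hα₀ hα₁ x y)
end

section
/- Let A ∈ B(H) have Cartesian decomposition A = P + iQ with P, Q self-adjoint. If f, g are nonnegative continuous functions on [0,∞) with f(t)g(t) = t for all t ≥ 0, then |⟨Ax,y⟩| ≤ ‖f(|P|)x‖·‖g(|P|)y‖ + ‖f(|Q|)x‖·‖g(|Q|)y‖ for all x, y ∈ H. -/
/-!
Since `f 0 * g 0 = 0`, one of `f 0`, `g 0` vanishes; by the symmetry `‖⟪P x, y⟫‖ = ‖⟪P y, x⟫‖`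
say `f 0 = 0`. Then the odd extension `f̃ t = sign t * f |t|` of `f` is continuous and
`g |t| * f̃ t = t`, so `P = g(|P|) f̃(P)` and `⟪P x, y⟫ = ⟪f̃(P) x, g(|P|) y⟫`. As `|f̃| = f ∘ |·|`,
`‖f̃(P) x‖ = ‖f(|P|) x‖`, and Cauchy–Schwarz gives `‖⟪P x, y⟫‖ ≤ ‖f(|P|) x‖ * ‖g(|P|) y‖`.
The same holds for `Q`, and `‖⟪A x, y⟫‖ ≤ ‖⟪P x, y⟫‖ + ‖⟪Q x, y⟫‖`.
-/

open ContinuousLinearMap Set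

/-- For `f 0 = 0` this is `t ↦ sign t * f |t|`, written so that its continuity only needs `f`
to be continuous on `[0, ∞)`. -/
def oddExtension (f : ℝ → ℝ) (t : ℝ) : ℝ := f (max t 0) - f (max (-t) 0)

lemma continuous_oddExtension {f : ℝ → ℝ} (hf : ContinuousOn f (Ici 0)) :
    Continuous (oddExtension f) := by
  have h : ∀ {u : ℝ → ℝ}, Continuous u → Continuous (fun t => f (max (u t) 0)) := fun hu =>
    hf.comp_continuous (hu.max continuous_const) fun _ => mem_Ici.2 (le_max_right _ _)
  exact (h continuous_id).sub (h continuous_neg)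

lemma oddExtension_of_nonneg {f : ℝ → ℝ} (h0 : f 0 = 0) {t : ℝ} (ht : 0 ≤ t) :
    oddExtension f t = f t := by
  simp [oddExtension, ht, h0]

lemma oddExtension_of_nonpos {f : ℝ → ℝ} (h0 : f 0 = 0) {t : ℝ} (ht : t ≤ 0) :
    oddExtension f t = -f (-t) := by
  simp [oddExtension, ht, h0]

lemma abs_oddExtension {f : ℝ → ℝ} (h0 : f 0 = 0) (t : ℝ) : |oddExtension f t| = |f (|t|)| := by
  rcases le_total 0 t with ht | ht
  · rw [oddExtension_of_nonneg h0 ht, abs_of_nonneg ht]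
  · rw [oddExtension_of_nonpos h0 ht, abs_neg, abs_of_nonpos ht]

lemma mul_oddExtension {f g : ℝ → ℝ} (h0 : f 0 = 0) (hfg : ∀ t ∈ Ici (0 : ℝ), f t * g t = t)
    (t : ℝ) : g |t| * oddExtension f t = t := by
  rcases le_total 0 t with ht | ht
  · rw [oddExtension_of_nonneg h0 ht, abs_of_nonneg ht, mul_comm, hfg t ht]
  · rw [oddExtension_of_nonpos h0 ht, abs_of_nonpos ht, mul_neg, mul_comm,
      hfg _ (neg_nonneg.2 ht), neg_neg]

section CFC

variable {H : Type*} [NormedAddCommGroup H] [InnerProductSpace ℂ H] [CompleteSpace H]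
  {P : H →L[ℂ] H}

lemma norm_cfc_apply_eq_of_abs_eqOn {a b : ℝ → ℝ}
    (ha : ContinuousOn a (spectrum ℝ P)) (hb : ContinuousOn b (spectrum ℝ P))
    (hab : (spectrum ℝ P).EqOn (|a ·|) (|b ·|)) (x : H) :
    ‖cfc a P x‖ = ‖cfc b P x‖ := by
  have hsq : ∀ c : ℝ → ℝ, ContinuousOn c (spectrum ℝ P) →
      ‖cfc c P x‖ ^ 2 = RCLike.re (inner ℂ (cfc (fun t => c t * c t) P x) x) := by
    intro c hc
    rw [apply_norm_sq_eq_inner_adjoint_left, isSelfAdjoint_iff'.mp (cfc_predicate c P),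
      cfc_mul c c P hc hc]
    rfl
  have hcongr : cfc (fun t => a t * a t) P = cfc (fun t => b t * b t) P :=
    cfc_congr fun t ht => by simp only [← abs_mul_abs_self (a t), hab ht, abs_mul_abs_self]
  rw [← pow_left_inj₀ (norm_nonneg _) (norm_nonneg _) two_ne_zero, hsq a ha, hsq b hb, hcongr]

lemma IsSelfAdjoint.norm_inner_apply_le_of_mul_eqOn (hP : IsSelfAdjoint P) {a b : ℝ → ℝ}
    (ha : ContinuousOn a (spectrum ℝ P)) (hb : ContinuousOn b (spectrum ℝ P))
    (hab : (spectrum ℝ P).EqOn (fun t => b t * a t) id) (x y : H) :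
    ‖inner ℂ (P x) y‖ ≤ ‖cfc a P x‖ * ‖cfc b P y‖ := by
  have hP_eq : P = cfc b P * cfc a P := by
    rw [← cfc_mul b a P hb ha, cfc_congr hab, cfc_id ℝ P hP]
  have hPx : P x = cfc b P (cfc a P x) := congr($hP_eq x)
  calc ‖inner ℂ (P x) y‖ = ‖inner ℂ (cfc a P x) (cfc b P y)‖ := by
        rw [hPx, ← adjoint_inner_right, isSelfAdjoint_iff'.mp (cfc_predicate b P)]
    _ ≤ ‖cfc a P x‖ * ‖cfc b P y‖ := norm_inner_le_norm _ _

lemma IsSelfAdjoint.norm_inner_apply_le_of_left_eq_zero (hP : IsSelfAdjoint P) {f g : ℝ → ℝ}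
    (hf : ContinuousOn f (Ici 0)) (hg : ContinuousOn g (Ici 0))
    (hfg : ∀ t ∈ Ici (0 : ℝ), f t * g t = t) (h0 : f 0 = 0) (x y : H) :
    ‖inner ℂ (P x) y‖ ≤
      ‖cfc f (cfc (fun t : ℝ => |t|) P) x‖ * ‖cfc g (cfc (fun t : ℝ => |t|) P) y‖ := by
  have hcomp : ∀ {u : ℝ → ℝ}, ContinuousOn u (Ici 0) →
      cfc u (cfc (fun t : ℝ => |t|) P) = cfc (u |·|) P :=
    fun hu => (cfc_comp' _ _ P (hu.mono <| by rintro _ ⟨t, -, rfl⟩; exact abs_nonneg t)).symm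
  have habs : ∀ {u : ℝ → ℝ}, ContinuousOn u (Ici 0) → ContinuousOn (u |·|) (spectrum ℝ P) :=
    fun hu => (hu.comp_continuous continuous_abs abs_nonneg).continuousOn
  have hodd := (continuous_oddExtension hf).continuousOn (s := spectrum ℝ P)
  rw [hcomp hf, hcomp hg,
    ← norm_cfc_apply_eq_of_abs_eqOn hodd (habs hf) fun t _ => abs_oddExtension h0 t]
  exact hP.norm_inner_apply_le_of_mul_eqOn hodd (habs hg) (fun t _ => mul_oddExtension h0 hfg t) x y

lemma IsSelfAdjoint.norm_inner_apply_le (hP : IsSelfAdjoint P) {f g : ℝ → ℝ}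
    (hf : ContinuousOn f (Ici 0)) (hg : ContinuousOn g (Ici 0))
    (hfg : ∀ t ∈ Ici (0 : ℝ), f t * g t = t) (x y : H) :
    ‖inner ℂ (P x) y‖ ≤
      ‖cfc f (cfc (fun t : ℝ => |t|) P) x‖ * ‖cfc g (cfc (fun t : ℝ => |t|) P) y‖ := by
  rcases mul_eq_zero.1 (hfg 0 (mem_Ici.2 le_rfl)) with h0 | h0
  · exact hP.norm_inner_apply_le_of_left_eq_zero hf hg hfg h0 x y
  · calc ‖inner ℂ (P x) y‖ = ‖inner ℂ (P y) x‖ := by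
          rw [norm_inner_symm]
          exact congrArg norm (hP.isSymmetric y x).symm
      _ ≤ ‖cfc g (cfc (fun t : ℝ => |t|) P) y‖ * ‖cfc f (cfc (fun t : ℝ => |t|) P) x‖ :=
          hP.norm_inner_apply_le_of_left_eq_zero hg hf
            (fun t ht => by rw [mul_comm, hfg t ht]) h0 y x
      _ = _ := mul_comm _ _

end CFC

lemma norm_inner_add_I_smul_apply_le {H : Type*} [NormedAddCommGroup H] [InnerProductSpace ℂ H]
    (P Q : H →L[ℂ] H) (x y : H) :
    ‖inner ℂ ((P + Complex.I • Q) x) y‖ ≤ ‖inner ℂ (P x) y‖ + ‖inner ℂ (Q x) y‖ := by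
  rw [add_apply, smul_apply, inner_add_left, inner_smul_left]
  refine (norm_add_le _ _).trans_eq ?_
  simp

theorem cartesian_mixed_schwarz_general
    {H : Type*} [NormedAddCommGroup H] [InnerProductSpace ℂ H] [CompleteSpace H]
    (A P Q : H →L[ℂ] H) (hP : IsSelfAdjoint P) (hQ : IsSelfAdjoint Q)
    (hA : A = P + Complex.I • Q)
    (f g : ℝ → ℝ)
    (hf : ContinuousOn f (Set.Ici 0)) (hg : ContinuousOn g (Set.Ici 0))
    (hfg : ∀ t ∈ Set.Ici (0 : ℝ), f t * g t = t) (x y : H) :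
    ‖(inner ℂ (A x) y : ℂ)‖ ≤
      ‖cfc f (cfc (fun t : ℝ => |t|) P) x‖ * ‖cfc g (cfc (fun t : ℝ => |t|) P) y‖ +
      ‖cfc f (cfc (fun t : ℝ => |t|) Q) x‖ * ‖cfc g (cfc (fun t : ℝ => |t|) Q) y‖ := by
  subst hA
  exact (norm_inner_add_I_smul_apply_le P Q x y).trans <|
    add_le_add (hP.norm_inner_apply_le hf hg hfg x y) (hQ.norm_inner_apply_le hf hg hfg x y)

theorem cartesian_mixed_schwarz
    {H : Type*} [NormedAddCommGroup H] [InnerProductSpace ℂ H] [CompleteSpace H]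
    (A P Q : H →L[ℂ] H) (hP : IsSelfAdjoint P) (hQ : IsSelfAdjoint Q)
    (hA : A = P + Complex.I • Q)
    (f g : ℝ → ℝ)
    (hf : ContinuousOn f (Set.Ici 0)) (hg : ContinuousOn g (Set.Ici 0))
    (hf0 : ∀ t ∈ Set.Ici (0 : ℝ), 0 ≤ f t) (hg0 : ∀ t ∈ Set.Ici (0 : ℝ), 0 ≤ g t)
    (hfg : ∀ t ∈ Set.Ici (0 : ℝ), f t * g t = t) (x y : H) :
    ‖(inner ℂ (A x) y : ℂ)‖ ≤
      ‖cfc f (cfc (fun t : ℝ => |t|) P) x‖ * ‖cfc g (cfc (fun t : ℝ => |t|) P) y‖ +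
      ‖cfc f (cfc (fun t : ℝ => |t|) Q) x‖ * ‖cfc g (cfc (fun t : ℝ => |t|) Q) y‖ :=
  cartesian_mixed_schwarz_general A P Q hP hQ hA f g hf hg hfg x y
end

section
/- Every zero λ of p(z) = zⁿ + a_n z^{n−1} + ⋯ + a₁ lies in the rectangle [λ_min(Re C(p)), λ_max(Re C(p))] × [λ_min(Im C(p)), λ_max(Im C(p))], i.e., λ_min(Re C(p)) ≤ Re(λ) ≤ λ_max(Re C(p)) and λ_min(Im C(p)) ≤ Im(λ) ≤ λ_max(Im C(p)). -/
open scoped Matrix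

def companionMatrix {n : ℕ} (a : Fin n → ℂ) : Matrix (Fin n) (Fin n) ℂ :=
  Matrix.of fun i j =>
    if (i : ℕ) = 0 then -a j.rev
    else if (i : ℕ) = (j : ℕ) + 1 then 1
    else 0

/-!
A zero `λ` of `p` is an eigenvalue of `C = C(p)`, with eigenvector `x = (λ^(n-1), …, λ, 1)`.
For any eigenvector, `⟪x, (Re C) x⟫ = (Re λ) ‖x‖²` and `⟪x, (Im C) x⟫ = (Im λ) ‖x‖²`; and for a
Hermitian matrix `H`, expanding `x` in an orthonormal eigenbasis writes `Re ⟪x, H x⟫ / ‖x‖²` as a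
weighted average of the eigenvalues of `H`, which lies between the smallest and the largest.
-/

open scoped ComplexConjugate InnerProductSpace

theorem mem_Icc_iInf_iSup_of_mul_sum_eq {ι : Type*} [Fintype ι] {μ w : ι → ℝ} {t : ℝ}
    (hw : ∀ i, 0 ≤ w i) (hpos : 0 < ∑ i, w i) (ht : t * ∑ i, w i = ∑ i, μ i * w i) :
    t ∈ Set.Icc (⨅ i, μ i) (⨆ i, μ i) := by
  have hμ := Set.finite_range μ
  constructor
  · refine le_of_mul_le_mul_right ?_ hpos
    rw [ht, Finset.mul_sum]
    exact Finset.sum_le_sum fun i _ ↦ mul_le_mul_of_nonneg_right (ciInf_le hμ.bddBelow i) (hw i)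
  · refine le_of_mul_le_mul_right ?_ hpos
    rw [ht, Finset.mul_sum]
    exact Finset.sum_le_sum fun i _ ↦ mul_le_mul_of_nonneg_right (le_ciSup hμ.bddAbove i) (hw i)

theorem LinearMap.IsSymmetric.re_inner_apply_self_eq_sum {𝕜 E ι : Type*} [RCLike 𝕜]
    [NormedAddCommGroup E] [InnerProductSpace 𝕜 E] [Fintype ι] {T : E →ₗ[𝕜] E}
    (hT : T.IsSymmetric) (b : OrthonormalBasis ι 𝕜 E) {μ : ι → ℝ}
    (hb : ∀ i, T (b i) = (μ i : 𝕜) • b i) (x : E) :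
    RCLike.re ⟪x, T x⟫_𝕜 = ∑ i, μ i * ‖⟪b i, x⟫_𝕜‖ ^ 2 := by
  rw [← b.sum_inner_mul_inner x (T x), map_sum]
  refine Finset.sum_congr rfl fun i _ ↦ ?_
  rw [← hT, hb, inner_smul_left, RCLike.conj_ofReal, ← inner_conj_symm x, mul_left_comm,
    RCLike.conj_mul]
  norm_cast

section RCLike

variable {𝕜 n : Type*} [RCLike 𝕜] [Fintype n] [DecidableEq n]

theorem Matrix.IsHermitian.toEuclideanLin_eigenvectorBasis {A : Matrix n n 𝕜}
    (hA : A.IsHermitian) (i : n) :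
    Matrix.toEuclideanLin A (hA.eigenvectorBasis i) =
      (hA.eigenvalues i : 𝕜) • hA.eigenvectorBasis i := by
  rw [Matrix.toLpLin_apply, hA.mulVec_eigenvectorBasis, RCLike.real_smul_eq_coe_smul (K := 𝕜)]
  rfl

theorem Matrix.IsHermitian.mem_Icc_of_re_inner_eq {A : Matrix n n 𝕜} (hA : A.IsHermitian)
    {x : EuclideanSpace 𝕜 n} (hx : x ≠ 0) {t : ℝ}
    (ht : RCLike.re ⟪x, Matrix.toEuclideanLin A x⟫_𝕜 = t * ‖x‖ ^ 2) :
    t ∈ Set.Icc (⨅ i, hA.eigenvalues i) (⨆ i, hA.eigenvalues i) := by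
  have hparseval := hA.eigenvectorBasis.sum_sq_norm_inner_right x
  refine mem_Icc_iInf_iSup_of_mul_sum_eq (w := fun i ↦ ‖⟪hA.eigenvectorBasis i, x⟫_𝕜‖ ^ 2)
    (fun i ↦ by positivity) ?_ ?_
  · rw [hparseval]
    exact pow_pos (norm_pos_iff.mpr hx) 2
  · rw [hparseval, ← ht, (Matrix.isSymmetric_toEuclideanLin_iff.mpr hA).re_inner_apply_self_eq_sum
      hA.eigenvectorBasis hA.toEuclideanLin_eigenvectorBasis]

theorem Matrix.inner_toEuclideanLin_conjTranspose_eq {C : Matrix n n 𝕜}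
    {x : EuclideanSpace 𝕜 n} {lam : 𝕜} (hx : Matrix.toEuclideanLin C x = lam • x) :
    ⟪x, Matrix.toEuclideanLin Cᴴ x⟫_𝕜 = conj lam * (‖x‖ : 𝕜) ^ 2 := by
  rw [Matrix.toEuclideanLin_conjTranspose_eq_adjoint, LinearMap.adjoint_inner_right, hx,
    inner_smul_left, inner_self_eq_norm_sq_to_K]

end RCLike

section Complex

variable {n : Type*} [Fintype n] [DecidableEq n] {C : Matrix n n ℂ} {x : EuclideanSpace ℂ n}
  {lam : ℂ}

theorem Matrix.inner_toEuclideanLin_re_part_eq (hx : Matrix.toEuclideanLin C x = lam • x) :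
    ⟪x, Matrix.toEuclideanLin ((1 / 2 : ℂ) • (C + Cᴴ)) x⟫_ℂ = ((lam.re * ‖x‖ ^ 2 : ℝ) : ℂ) := by
  rw [map_smul, LinearMap.smul_apply, map_add, LinearMap.add_apply, inner_smul_right,
    inner_add_right, Matrix.inner_toEuclideanLin_conjTranspose_eq hx, hx, inner_smul_right,
    inner_self_eq_norm_sq_to_K, ← add_mul, Complex.add_conj]
  push_cast [RCLike.ofReal_eq_complex_ofReal]
  ring

theorem Matrix.inner_toEuclideanLin_im_part_eq (hx : Matrix.toEuclideanLin C x = lam • x) :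
    ⟪x, Matrix.toEuclideanLin ((-Complex.I / 2) • (C - Cᴴ)) x⟫_ℂ =
      ((lam.im * ‖x‖ ^ 2 : ℝ) : ℂ) := by
  rw [map_smul, LinearMap.smul_apply, map_sub, LinearMap.sub_apply, inner_smul_right,
    inner_sub_right, Matrix.inner_toEuclideanLin_conjTranspose_eq hx, hx, inner_smul_right,
    inner_self_eq_norm_sq_to_K, ← sub_mul, Complex.sub_conj]
  push_cast [RCLike.ofReal_eq_complex_ofReal]
  linear_combination (-lam.im * (‖x‖ : ℂ) ^ 2) * Complex.I_mul_I

end Complex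

def revPowers {R : Type*} [Monoid R] (r : R) (n : ℕ) : Fin n → R := fun i ↦ r ^ (i.rev : ℕ)

theorem revPowers_ne_zero {R : Type*} [MonoidWithZero R] [Nontrivial R] {n : ℕ} (hn : 0 < n)
    (r : R) : revPowers r n ≠ 0 := by
  obtain ⟨m, rfl⟩ := Nat.exists_eq_succ_of_ne_zero hn.ne'
  intro h
  simpa [revPowers] using congrFun h (Fin.last m)

theorem companionMatrix_mulVec_revPowers {n : ℕ} {a : Fin n → ℂ} {lam : ℂ}
    (hroot : lam ^ n + ∑ i : Fin n, a i * lam ^ (i : ℕ) = 0) :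
    companionMatrix a *ᵥ revPowers lam n = lam • revPowers lam n := by
  cases n with
  | zero => exact funext fun i ↦ i.elim0
  | succ m =>
    funext i
    refine Fin.cases ?_ (fun i ↦ ?_) i
    · have hsum : ∑ j : Fin (m + 1), a j.rev * lam ^ (j.rev : ℕ) =
          ∑ k : Fin (m + 1), a k * lam ^ (k : ℕ) :=
        Fintype.sum_equiv Fin.revPerm _ _ fun _ ↦ rfl
      simp only [Matrix.mulVec, dotProduct, companionMatrix, revPowers, Matrix.of_apply,
        Fin.val_zero, if_true, neg_mul, Finset.sum_neg_distrib, hsum, Pi.smul_apply, smul_eq_mul,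
        Fin.rev_zero, Fin.val_last]
      linear_combination -hroot
    · have hrow : ∀ j, companionMatrix a i.succ j = if j = i.castSucc then 1 else 0 := by
        intro j
        simp only [companionMatrix, Matrix.of_apply, Fin.val_succ, Nat.add_one_ne_zero, if_false,
          Nat.add_right_cancel_iff, Fin.ext_iff, Fin.val_castSucc, eq_comm (a := (j : ℕ))]
      simp only [Matrix.mulVec, dotProduct, hrow, revPowers, ite_mul, one_mul, zero_mul,
        Finset.sum_ite_eq', Finset.mem_univ, if_true, Pi.smul_apply, smul_eq_mul, Fin.val_rev,
        Fin.val_succ, Fin.val_castSucc]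
      rw [← pow_succ']
      congr 1
      omega

theorem zeros_in_rectangle {n : ℕ} (hn : 0 < n) (a : Fin n → ℂ)
    (hRe : ((1 / 2 : ℂ) • (companionMatrix a + (companionMatrix a)ᴴ)).IsHermitian)
    (hIm : ((-(Complex.I) / 2) • (companionMatrix a - (companionMatrix a)ᴴ)).IsHermitian)
    (lam : ℂ) (hroot : lam ^ n + ∑ i : Fin n, a i * lam ^ (i : ℕ) = 0) :
    ((⨅ i, hRe.eigenvalues i) ≤ lam.re ∧ lam.re ≤ ⨆ i, hRe.eigenvalues i) ∧
    ((⨅ i, hIm.eigenvalues i) ≤ lam.im ∧ lam.im ≤ ⨆ i, hIm.eigenvalues i) := by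
  set x : EuclideanSpace ℂ (Fin n) := WithLp.toLp 2 (revPowers lam n)
  have hx : Matrix.toEuclideanLin (companionMatrix a) x = lam • x := by
    rw [Matrix.toLpLin_toLp, Matrix.toLin'_apply, companionMatrix_mulVec_revPowers hroot]
    rfl
  have hx0 : x ≠ 0 := (WithLp.toLp_eq_zero 2).not.mpr (revPowers_ne_zero hn lam)
  exact ⟨hRe.mem_Icc_of_re_inner_eq hx0
      (by rw [Matrix.inner_toEuclideanLin_re_part_eq hx]; exact RCLike.ofReal_re _),
    hIm.mem_Icc_of_re_inner_eq hx0
      (by rw [Matrix.inner_toEuclideanLin_im_part_eq hx]; exact RCLike.ofReal_re _)⟩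
end
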